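/- arXiv:1612.00943 — 2 statements merged into one kernel-verified Lean document; each statement's English description precedes it below -/
import Mathlib

section
/- Let G be a finite simple connected graph with A(G) ≠ ∅. If md(G*) ≥ 2, then mc(G) = md(G*). -/
variable {V : Type*}

/-- The set of vertices covered by a set of edges. -/
def edgeCover (M : Finset (Sym2 V)) : Set V := {v | ∃ e ∈ M, v ∈ e}

/-- `M` is a matching of `G`: a set of pairwise disjoint edges of `G`. -/
def IsMatchingSet (G : SimpleGraph V) (M : Finset (Sym2 V)) : Prop :=
  (∀ e ∈ M, e ∈ G.edgeSet) ∧
    ∀ e ∈ M, ∀ f ∈ M, e ≠ f → ∀ v : V, v ∈ e → v ∉ f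

/-- `M` is a maximum matching of `G`. -/
def IsMaximumMatchingSet (G : SimpleGraph V) (M : Finset (Sym2 V)) : Prop :=
  IsMatchingSet G M ∧ ∀ N : Finset (Sym2 V), IsMatchingSet G N → N.card ≤ M.card

variable [Fintype V] [DecidableEq V]

/-- `M` is a `k`-matching cover of `G`: a union of `k` matchings of `G` covering `V(G)`. -/
def IsKMatchingCover (G : SimpleGraph V) (k : ℕ) (M : Finset (Sym2 V)) : Prop :=
  (∃ f : Fin k → Finset (Sym2 V), (∀ i, IsMatchingSet G (f i)) ∧
      M = Finset.univ.biUnion f) ∧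
    ∀ v : V, v ∈ edgeCover M

/-- The matching cover number `mc(G)`. -/
noncomputable def mc (G : SimpleGraph V) : ℕ :=
  sInf {k | ∃ M : Finset (Sym2 V), IsKMatchingCover G k M}

/-- `M` is a `k`-matching `D`-cover of `G`: a union of `k` matchings of `G` covering `D`. -/
def IsKMatchingDCover (G : SimpleGraph V) (D : Set V) (k : ℕ)
    (M : Finset (Sym2 V)) : Prop :=
  (∃ f : Fin k → Finset (Sym2 V), (∀ i, IsMatchingSet G (f i)) ∧
      M = Finset.univ.biUnion f) ∧
    ∀ v ∈ D, v ∈ edgeCover M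

/-- The matching `D`-cover number `md(G)`. -/
noncomputable def md (G : SimpleGraph V) (D : Set V) : ℕ :=
  sInf {k | ∃ M : Finset (Sym2 V), IsKMatchingDCover G D k M}

/-- The Gallai–Edmonds set `D(G)`: vertices missed by some maximum matching. -/
def Dset (G : SimpleGraph V) : Set V :=
  {v | ∃ M : Finset (Sym2 V), IsMaximumMatchingSet G M ∧ v ∉ edgeCover M}

/-- The Gallai–Edmonds set `A(G) = N_G(D(G))`. -/
def Aset (G : SimpleGraph V) : Set V :=
  {v | v ∉ Dset G ∧ ∃ u ∈ Dset G, G.Adj u v}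

/-- The Gallai–Edmonds set `C(G) = V(G) \ (A(G) ∪ D(G))`. -/
def Cset (G : SimpleGraph V) : Set V :=
  {v | v ∉ Dset G ∧ v ∉ Aset G}

/-- The induced subgraph `G[s]`, viewed as a graph on the same vertex type. -/
def indOn (G : SimpleGraph V) (s : Set V) : SimpleGraph V where
  Adj a b := a ∈ s ∧ b ∈ s ∧ G.Adj a b
  symm := ⟨by rintro a b ⟨ha, hb, h⟩; exact ⟨hb, ha, h.symm⟩⟩
  loopless := ⟨by rintro a ⟨-, -, h⟩; exact G.irrefl h⟩

/-- `D*`: the set of isolated vertices of `G[D(G)]`. -/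
def DstarSet (G : SimpleGraph V) : Set V :=
  {v | v ∈ Dset G ∧ ∀ u : V, ¬ (indOn G (Dset G)).Adj v u}

/-- The bipartite graph `G*`, obtained from `G` by deleting the nontrivial components of
`G[D(G)]`, the vertices of `C(G)`, and the edges spanned by `A(G)`: its edges are exactly
the edges of `G` joining `A(G)` and `D*`. -/
def Gstar (G : SimpleGraph V) : SimpleGraph V where
  Adj a b := G.Adj a b ∧
    ((a ∈ Aset G ∧ b ∈ DstarSet G) ∨ (a ∈ DstarSet G ∧ b ∈ Aset G))
  symm := ⟨by rintro a b ⟨h, hc⟩; exact ⟨h.symm, by tauto⟩⟩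
  loopless := ⟨by rintro a ⟨h, -⟩; exact G.irrefl h⟩

open Classical in
/-- The degree of `v` in the edge set `M`; this is the degree of `v` in `G[M]+A`
(vertices not covered by `M` have degree `0`). -/
noncomputable def degM (M : Finset (Sym2 V)) (v : V) : ℕ :=
  (M.filter fun e => v ∈ e).card

/-- The maximum degree `Δ(G[M]+A)`. -/
noncomputable def maxDegPlus (M : Finset (Sym2 V)) : ℕ :=
  Finset.univ.sup fun v : V => degM M v

/-- `w` is a maximum center of `M` (all vertices of `A` being regarded as centers). -/
def IsMaximumCenter (A : Set V) (M : Finset (Sym2 V)) (w : V) : Prop :=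
  w ∈ A ∧ degM M w = maxDegPlus M

/-- `(A, D)` is a bipartition of `G`. -/
def IsBipartition (G : SimpleGraph V) (A D : Set V) : Prop :=
  Disjoint A D ∧ A ∪ D = Set.univ ∧
    ∀ a b : V, G.Adj a b → (a ∈ A ∧ b ∈ D) ∨ (a ∈ D ∧ b ∈ A)

/-- A matching `D`-cover of `G`, recorded as an edge set
(a union of matchings of `G` covering `D`). -/
def IsMDCoverSet (G : SimpleGraph V) (D : Set V) (M : Finset (Sym2 V)) : Prop :=
  ∃ k, IsKMatchingDCover G D k M

/-- A minimal matching `D`-cover: no proper subset is a matching `D`-cover. -/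
def IsMinimalMDCover (G : SimpleGraph V) (D : Set V) (M : Finset (Sym2 V)) : Prop :=
  IsMDCoverSet G D M ∧ ∀ M' ⊂ M, ¬ IsMDCoverSet G D M'

/-- The graph `G[M]` spanned by an edge set, on the same vertex type. -/
def fromEdges (M : Finset (Sym2 V)) : SimpleGraph V where
  Adj a b := a ≠ b ∧ s(a, b) ∈ M
  symm := ⟨by rintro a b ⟨hne, h⟩; exact ⟨hne.symm, by rwa [Sym2.eq_swap]⟩⟩
  loopless := ⟨by rintro a ⟨hne, -⟩; exact hne rfl⟩

/-- The connected component of `v` in `G[M]` is a star with center `c`: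
every vertex of the component is `c` or a neighbour of `c`, and every edge of the
component is incident with `c`. -/
def StarCenteredAt (M : Finset (Sym2 V)) (c v : V) : Prop :=
  (fromEdges M).Reachable c v ∧
    (∀ u : V, (fromEdges M).Reachable u v → u = c ∨ (fromEdges M).Adj c u) ∧
    ∀ e ∈ M, (∃ x, x ∈ e ∧ (fromEdges M).Reachable x v) → c ∈ e

/-- Every component of `G[M]` is a star whose center lies in `A`. -/
def CentersInA (A : Set V) (M : Finset (Sym2 V)) : Prop :=
  ∀ v ∈ edgeCover M, ∃ c ∈ A, StarCenteredAt M c v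

/-- `w` is an `M`-switching path: an `M`-alternating path (starting at a maximum center
with an edge of `M`, vertices alternately centers in `A` and ends, edges alternately in
`M` and outside `M`) ending at a center `v` with `d(u) ≥ d(v) + 2`. -/
def IsSwitchingPath (G : SimpleGraph V) (A : Set V) (M : Finset (Sym2 V))
    (n : ℕ) (w : Fin (n + 1) → V) : Prop :=
  0 < n ∧ Function.Injective w ∧
    (∀ i : Fin n, G.Adj (w i.castSucc) (w i.succ)) ∧
    (∀ i : Fin n, (s(w i.castSucc, w i.succ) ∈ M ↔ Even (i : ℕ))) ∧
    (∀ i : Fin (n + 1), w i ∈ A ↔ Even (i : ℕ)) ∧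
    w (Fin.last n) ∈ A ∧
    IsMaximumCenter A M (w 0) ∧
    degM M (w (Fin.last n)) + 2 ≤ degM M (w 0)

/-- There is an `M`-switching path from `u` to `v` in `G`. -/
def ExistsSwitchingPath (G : SimpleGraph V) (A : Set V) (M : Finset (Sym2 V))
    (u v : V) : Prop :=
  ∃ (n : ℕ) (w : Fin (n + 1) → V),
    IsSwitchingPath G A M n w ∧ w 0 = u ∧ w (Fin.last n) = v

/-- The edge set of the path `w 0, w 1, …, w n`. -/
def pathEdges (n : ℕ) (w : Fin (n + 1) → V) : Finset (Sym2 V) :=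
  Finset.univ.image fun i : Fin n => s(w i.castSucc, w i.succ)

set_option linter.unusedSectionVars false

section MCAux

open Finset

variable {V : Type*} [Fintype V] [DecidableEq V] {G : SimpleGraph V}

lemma MC.matching_subset {M N : Finset (Sym2 V)} (hM : IsMatchingSet G M) (h : N ⊆ M) :
    IsMatchingSet G N :=
  ⟨fun e he => hM.1 e (h he), fun e he f hf hne v hv => hM.2 e (h he) f (h hf) hne v hv⟩

lemma MC.matching_empty : IsMatchingSet G ∅ :=
  ⟨fun e he => absurd he (Finset.notMem_empty e), fun e he => absurd he (Finset.notMem_empty e)⟩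

lemma MC.eq_of_mem {M : Finset (Sym2 V)} (hM : IsMatchingSet G M) {e f : Sym2 V}
    (he : e ∈ M) (hf : f ∈ M) {v : V} (hve : v ∈ e) (hvf : v ∈ f) : e = f := by
  by_contra hne
  exact hM.2 e he f hf hne v hve hvf

lemma MC.not_covered_iff {M : Finset (Sym2 V)} {v : V} :
    v ∉ edgeCover M ↔ ∀ e ∈ M, v ∉ e := by
  simp [edgeCover]

/-- argmax of a weight over matchings satisfying a predicate -/
lemma MC.exists_maxwt (P : Finset (Sym2 V) → Prop) (w : Finset (Sym2 V) → ℕ)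
    (hne : ∃ M, IsMatchingSet G M ∧ P M) :
    ∃ M, (IsMatchingSet G M ∧ P M) ∧ ∀ N, IsMatchingSet G N → P N → w N ≤ w M := by
  classical
  obtain ⟨M0, hM0⟩ := hne
  have hmem : M0 ∈ Finset.univ.filter (fun M => IsMatchingSet G M ∧ P M) := by
    simp [hM0.1, hM0.2]
  obtain ⟨M, hM, hmax⟩ := Finset.exists_max_image
    (Finset.univ.filter (fun M => IsMatchingSet G M ∧ P M)) w ⟨M0, hmem⟩
  simp only [Finset.mem_filter, Finset.mem_univ, true_and] at hM
  refine ⟨M, hM, fun N h1 h2 => hmax N (by simp [h1, h2])⟩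

/-- an edge of a matching, as an ordered pair through a vertex -/
lemma MC.edge_through {M : Finset (Sym2 V)} (hM : IsMatchingSet G M) {e : Sym2 V}
    (he : e ∈ M) {v : V} (hv : v ∈ e) : ∃ x, e = s(v, x) ∧ G.Adj v x := by
  obtain ⟨x, rfl⟩ := Sym2.mem_iff_exists.mp hv
  exact ⟨x, rfl, (SimpleGraph.mem_edgeSet G).mp (hM.1 _ he)⟩

/-- augmenting a matching with an edge between two uncovered vertices -/
lemma MC.augment {M : Finset (Sym2 V)} (hM : IsMatchingSet G M)
    (hmax : ∀ N, IsMatchingSet G N → N.card ≤ M.card) {u v : V}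
    (hu : u ∉ edgeCover M) (hv : v ∉ edgeCover M) (h : G.Adj u v) : False := by
  classical
  have hnotmem : s(u, v) ∉ M := fun hmem => hu ⟨s(u, v), hmem, Sym2.mem_mk_left u v⟩
  have hmatch : IsMatchingSet G (insert s(u, v) M) := by
    constructor
    · intro e he
      rcases Finset.mem_insert.mp he with rfl | he
      · exact (SimpleGraph.mem_edgeSet G).mpr h
      · exact hM.1 e he
    · intro e he f hf hne x hxe hxf
      rcases Finset.mem_insert.mp he with he' | he'
      · subst he'
        rcases Finset.mem_insert.mp hf with hf' | hf'
        · subst hf'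
          exact hne rfl
        · rcases Sym2.mem_iff.mp hxe with rfl | rfl
          · exact hu ⟨f, hf', hxf⟩
          · exact hv ⟨f, hf', hxf⟩
      · rcases Finset.mem_insert.mp hf with hf' | hf'
        · subst hf'
          rcases Sym2.mem_iff.mp hxf with rfl | rfl
          · exact hu ⟨e, he', hxe⟩
          · exact hv ⟨e, he', hxe⟩
        · exact hM.2 e he' f hf' hne x hxe hxf
  have := hmax _ hmatch
  rw [Finset.card_insert_of_notMem hnotmem] at this
  omega

/-- uncovered vertices of a maximum matching are in `D` -/
lemma MC.uncovered_mem_Dset {M : Finset (Sym2 V)} (hM : IsMatchingSet G M)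
    (hmax : ∀ N, IsMatchingSet G N → N.card ≤ M.card) {v : V}
    (hv : v ∉ edgeCover M) : v ∈ Dset G :=
  ⟨M, ⟨hM, hmax⟩, hv⟩

lemma MC.Aset_not_Dset {v : V} (hv : v ∈ Aset G) : v ∉ Dset G := hv.1

lemma MC.Dstar_subset_Dset {v : V} (hv : v ∈ DstarSet G) : v ∈ Dset G := hv.1

end MCAux
namespace MC

open Finset
open scoped symmDiff

variable {V : Type*} [Fintype V] [DecidableEq V] {G : SimpleGraph V}

/-- the symmetric difference graph -/
def Hgr (M M' : Finset (Sym2 V)) : SimpleGraph V := fromEdges (M ∆ M')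

open Classical in
/-- vertices reachable from `u` in the symmetric difference graph -/
noncomputable def Xf (M M' : Finset (Sym2 V)) (u : V) : Finset V :=
  Finset.univ.filter fun v => (Hgr M M').Reachable u v

open Classical in
/-- the edges of the component of `u` in the symmetric difference graph -/
noncomputable def compE (M M' : Finset (Sym2 V)) (u : V) : Finset (Sym2 V) :=
  (M ∆ M').filter fun e => ∃ v, v ∈ e ∧ v ∈ Xf M M' u

lemma mem_Xf {M M' : Finset (Sym2 V)} {u v : V} :
    v ∈ Xf M M' u ↔ (Hgr M M').Reachable u v := by
  classical
  simp only [Xf, Finset.mem_filter, Finset.mem_univ, true_and]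

lemma u_mem_Xf {M M' : Finset (Sym2 V)} {u : V} : u ∈ Xf M M' u :=
  mem_Xf.mpr (SimpleGraph.Reachable.refl u)

lemma symmDiff_mem_edgeSet {M M' : Finset (Sym2 V)} (hM : IsMatchingSet G M)
    (hM' : IsMatchingSet G M') {e : Sym2 V} (he : e ∈ M ∆ M') : e ∈ G.edgeSet := by
  rcases Finset.mem_symmDiff.mp he with ⟨h1, _⟩ | ⟨h1, _⟩
  · exact hM.1 e h1
  · exact hM'.1 e h1

lemma adj_of_symmDiff {M M' : Finset (Sym2 V)} (hM : IsMatchingSet G M)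
    (hM' : IsMatchingSet G M') {e : Sym2 V} (he : e ∈ M ∆ M') {v : V} (hv : v ∈ e) :
    ∃ w, e = s(v, w) ∧ (Hgr M M').Adj v w := by
  obtain ⟨w, rfl⟩ := Sym2.mem_iff_exists.mp hv
  have hGadj : G.Adj v w := (SimpleGraph.mem_edgeSet G).mp (symmDiff_mem_edgeSet hM hM' he)
  exact ⟨w, rfl, hGadj.ne, he⟩

/-- X2 : an edge of the symmetric difference with an endpoint in the component lies in `compE`
and has both endpoints in the component. -/
lemma mem_compE_of_mem_symmDiff {M M' : Finset (Sym2 V)} (hM : IsMatchingSet G M)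
    (hM' : IsMatchingSet G M') {u : V} {e : Sym2 V} (he : e ∈ M ∆ M') {v : V} (hv : v ∈ e)
    (hvX : v ∈ Xf M M' u) : e ∈ compE M M' u ∧ ∀ w ∈ e, w ∈ Xf M M' u := by
  classical
  obtain ⟨w, rfl, hadj⟩ := adj_of_symmDiff hM hM' he hv
  have hwX : w ∈ Xf M M' u := mem_Xf.mpr ((mem_Xf.mp hvX).trans hadj.reachable)
  refine ⟨by simp only [compE, Finset.mem_filter]; exact ⟨he, v, hv, hvX⟩, ?_⟩
  intro x hx
  rcases Sym2.mem_iff.mp hx with rfl | rfl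
  · exact hvX
  · exact hwX

lemma compE_subset_symmDiff {M M' : Finset (Sym2 V)} {u : V} :
    compE M M' u ⊆ M ∆ M' := Finset.filter_subset _ _

/-- X4 : endpoints of component edges are in the component. -/
lemma mem_Xf_of_mem_compE {M M' : Finset (Sym2 V)} (hM : IsMatchingSet G M)
    (hM' : IsMatchingSet G M') {u : V} {e : Sym2 V} (he : e ∈ compE M M' u) {v : V}
    (hv : v ∈ e) : v ∈ Xf M M' u := by
  classical
  simp only [compE, Finset.mem_filter] at he
  obtain ⟨he', w, hw, hwX⟩ := he
  exact (mem_compE_of_mem_symmDiff hM hM' he' hw hwX).2 v hv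

/-- X3 : any matching edge (from `M` or `M'`) at a vertex of the component is a component
edge. -/
lemma edge_mem_compE {M M' : Finset (Sym2 V)} (hM : IsMatchingSet G M)
    (hM' : IsMatchingSet G M') {u : V} (hu : u ∉ edgeCover M) {e : Sym2 V}
    (heN : e ∈ M ∨ e ∈ M') {v : V} (hv : v ∈ e) (hvX : v ∈ Xf M M' u) :
    e ∈ compE M M' u := by
  classical
  by_cases hsym : e ∈ M ∆ M'
  · exact (mem_compE_of_mem_symmDiff hM hM' hsym hv hvX).1
  · -- e ∈ M ∩ M'
    rw [Finset.mem_symmDiff] at hsym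
    push_neg at hsym
    have heM : e ∈ M := heN.elim id fun h => hsym.2 h
    have heM' : e ∈ M' := hsym.1 heM
    -- v ≠ u since u is not covered by M
    have hvu : v ≠ u := by
      rintro rfl
      exact hu ⟨e, heM, hv⟩
    -- find an edge of the symmetric difference at v
    have hreach : (Hgr M M').Reachable u v := mem_Xf.mp hvX
    obtain ⟨p⟩ := hreach
    obtain ⟨z, hadj⟩ : ∃ z, (Hgr M M').Adj v z := by
      cases h : p.reverse with
      | nil => exact absurd rfl hvu
      | cons hadj q => exact ⟨_, hadj⟩
    have hf0 : s(v, z) ∈ M ∆ M' := hadj.2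
    rcases Finset.mem_symmDiff.mp hf0 with ⟨h1, h2⟩ | ⟨h1, h2⟩
    · have : e = s(v, z) := eq_of_mem hM heM h1 hv (Sym2.mem_mk_left v z)
      exact absurd (this ▸ heM') h2
    · have : e = s(v, z) := eq_of_mem hM' heM' h1 hv (Sym2.mem_mk_left v z)
      exact absurd (this ▸ heM) h2

end MC
namespace MC

open Finset
open scoped symmDiff

variable {V : Type*} [Fintype V] [DecidableEq V] {G : SimpleGraph V}

section Flip

variable {M M' : Finset (Sym2 V)} {u : V}

/-- the flipped matching along the component of `u` -/
noncomputable def flipM (M M' : Finset (Sym2 V)) (u : V) (N₁ N₂ : Finset (Sym2 V)) : Finset (Sym2 V) :=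
  (N₁ \ compE M M' u) ∪ (N₂ ∩ compE M M' u)

lemma flip_matching (hM : IsMatchingSet G M) (hM' : IsMatchingSet G M')
    (hu : u ∉ edgeCover M) {N₁ N₂ : Finset (Sym2 V)}
    (hNN : N₁ = M ∧ N₂ = M' ∨ N₁ = M' ∧ N₂ = M) :
    IsMatchingSet G (flipM M M' u N₁ N₂) := by
  have hN₁ : IsMatchingSet G N₁ := by rcases hNN with ⟨rfl, rfl⟩ | ⟨rfl, rfl⟩ <;> assumption
  have hN₂ : IsMatchingSet G N₂ := by rcases hNN with ⟨rfl, rfl⟩ | ⟨rfl, rfl⟩ <;> assumption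
  have hN₁or : ∀ e ∈ N₁, e ∈ M ∨ e ∈ M' := by
    rcases hNN with ⟨rfl, rfl⟩ | ⟨rfl, rfl⟩
    · exact fun e he => Or.inl he
    · exact fun e he => Or.inr he
  have hmix : ∀ e ∈ N₁ \ compE M M' u, ∀ f ∈ N₂ ∩ compE M M' u, ∀ v, v ∈ e → v ∉ f := by
    intro e he f hf v hve hvf
    obtain ⟨he₁, he₂⟩ := Finset.mem_sdiff.mp he
    obtain ⟨hf₁, hf₂⟩ := Finset.mem_inter.mp hf
    have hvX : v ∈ Xf M M' u := mem_Xf_of_mem_compE hM hM' hf₂ hvf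
    exact he₂ (edge_mem_compE hM hM' hu (hN₁or e he₁) hve hvX)
  constructor
  · intro e he
    rcases Finset.mem_union.mp he with he | he
    · exact hN₁.1 e (Finset.mem_sdiff.mp he).1
    · exact hN₂.1 e (Finset.mem_inter.mp he).1
  · intro e he f hf hne v hve hvf
    rcases Finset.mem_union.mp he with he | he <;> rcases Finset.mem_union.mp hf with hf | hf
    · exact hN₁.2 e (Finset.mem_sdiff.mp he).1 f (Finset.mem_sdiff.mp hf).1 hne v hve hvf
    · exact hmix e he f hf v hve hvf
    · exact hmix f hf e he v hvf hve
    · exact hN₂.2 e (Finset.mem_inter.mp he).1 f (Finset.mem_inter.mp hf).1 hne v hve hvf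

lemma flip_card {N₁ N₂ : Finset (Sym2 V)} :
    (flipM M M' u N₁ N₂).card + (N₁ ∩ compE M M' u).card
      = N₁.card + (N₂ ∩ compE M M' u).card := by
  have hdisj : Disjoint (N₁ \ compE M M' u) (N₂ ∩ compE M M' u) := by
    rw [Finset.disjoint_left]
    intro e he hf
    exact (Finset.mem_sdiff.mp he).2 (Finset.mem_inter.mp hf).2
  rw [flipM, Finset.card_union_of_disjoint hdisj]
  have := Finset.card_sdiff_add_card_inter N₁ (compE M M' u)
  omega

lemma flip_cover_in (hM : IsMatchingSet G M) (hM' : IsMatchingSet G M')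
    (hu : u ∉ edgeCover M) {N₁ N₂ : Finset (Sym2 V)}
    (hNN : N₁ = M ∧ N₂ = M' ∨ N₁ = M' ∧ N₂ = M) {v : V} (hvX : v ∈ Xf M M' u) :
    v ∈ edgeCover (flipM M M' u N₁ N₂) ↔ v ∈ edgeCover N₂ := by
  have hN₁or : ∀ e ∈ N₁, e ∈ M ∨ e ∈ M' := by
    rcases hNN with ⟨rfl, rfl⟩ | ⟨rfl, rfl⟩
    · exact fun e he => Or.inl he
    · exact fun e he => Or.inr he
  have hN₂or : ∀ e ∈ N₂, e ∈ M ∨ e ∈ M' := by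
    rcases hNN with ⟨rfl, rfl⟩ | ⟨rfl, rfl⟩
    · exact fun e he => Or.inr he
    · exact fun e he => Or.inl he
  constructor
  · rintro ⟨e, he, hve⟩
    rcases Finset.mem_union.mp he with he | he
    · obtain ⟨he₁, he₂⟩ := Finset.mem_sdiff.mp he
      exact absurd (edge_mem_compE hM hM' hu (hN₁or e he₁) hve hvX) he₂
    · exact ⟨e, (Finset.mem_inter.mp he).1, hve⟩
  · rintro ⟨e, he, hve⟩
    have : e ∈ compE M M' u := edge_mem_compE hM hM' hu (hN₂or e he) hve hvX
    exact ⟨e, Finset.mem_union_right _ (Finset.mem_inter.mpr ⟨he, this⟩), hve⟩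

lemma flip_cover_out (hM : IsMatchingSet G M) (hM' : IsMatchingSet G M')
    {N₁ N₂ : Finset (Sym2 V)} {v : V} (hvX : v ∉ Xf M M' u) :
    v ∈ edgeCover (flipM M M' u N₁ N₂) ↔ v ∈ edgeCover N₁ := by
  constructor
  · rintro ⟨e, he, hve⟩
    rcases Finset.mem_union.mp he with he | he
    · exact ⟨e, (Finset.mem_sdiff.mp he).1, hve⟩
    · exact absurd (mem_Xf_of_mem_compE hM hM' (Finset.mem_inter.mp he).2 hve) hvX
  · rintro ⟨e, he, hve⟩
    have heC : e ∉ compE M M' u := fun hC => hvX (mem_Xf_of_mem_compE hM hM' hC hve)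
    exact ⟨e, Finset.mem_union_left _ (Finset.mem_sdiff.mpr ⟨he, heC⟩), hve⟩

open Classical in
/-- counting: the `N`-covered vertices in the component come in pairs -/
lemma count_covered (hM : IsMatchingSet G M) (hM' : IsMatchingSet G M')
    (hu : u ∉ edgeCover M) {N : Finset (Sym2 V)} (hN : IsMatchingSet G N)
    (hNor : N = M ∨ N = M') :
    ((Xf M M' u).filter (· ∈ edgeCover N)).card = 2 * (N ∩ compE M M' u).card := by
  have hNor' : ∀ e ∈ N, e ∈ M ∨ e ∈ M' := by
    rcases hNor with rfl | rfl
    · exact fun e he => Or.inl he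
    · exact fun e he => Or.inr he
  have hset : (Xf M M' u).filter (· ∈ edgeCover N)
      = (N ∩ compE M M' u).biUnion (fun e => Finset.univ.filter (· ∈ e)) := by
    ext v
    simp only [Finset.mem_filter, Finset.mem_biUnion, Finset.mem_inter, Finset.mem_univ,
      true_and]
    constructor
    · rintro ⟨hvX, e, he, hve⟩
      exact ⟨e, ⟨he, edge_mem_compE hM hM' hu (hNor' e he) hve hvX⟩, hve⟩
    · rintro ⟨e, ⟨he, heC⟩, hve⟩
      exact ⟨mem_Xf_of_mem_compE hM hM' heC hve, e, he, hve⟩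
  rw [hset, Finset.card_biUnion]
  · have hcard2 : ∀ e ∈ N ∩ compE M M' u, (Finset.univ.filter (· ∈ e)).card = 2 := by
      intro e he
      have heG : e ∈ G.edgeSet := hN.1 e (Finset.mem_inter.mp he).1
      revert heG
      refine Sym2.ind (fun a b => ?_) e
      intro heG
      have hab : a ≠ b := by
        intro h
        exact G.not_isDiag_of_mem_edgeSet heG (Sym2.mk_isDiag_iff.mpr h)
      have : Finset.univ.filter (· ∈ s(a, b)) = {a, b} := by
        ext x
        simp [Sym2.mem_iff]
      rw [this, Finset.card_pair hab]
    rw [Finset.sum_congr rfl hcard2, Finset.sum_const, smul_eq_mul, mul_comm]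
  · intro e he f hf hne
    rw [Function.onFun, Finset.disjoint_left]
    intro v hv hv'
    have hve := (Finset.mem_filter.mp hv).2
    have hvf := (Finset.mem_filter.mp hv').2
    exact hN.2 e (Finset.mem_inter.mp he).1 f (Finset.mem_inter.mp hf).1 hne v hve hvf

lemma compE_card : (compE M M' u).card
    = (M ∩ compE M M' u).card + (M' ∩ compE M M' u).card := by
  have hsplit : compE M M' u = (M ∩ compE M M' u) ∪ (M' ∩ compE M M' u) := by
    ext e
    constructor
    · intro he
      rcases Finset.mem_symmDiff.mp (compE_subset_symmDiff he) with ⟨h1, _⟩ | ⟨h1, _⟩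
      · exact Finset.mem_union_left _ (Finset.mem_inter.mpr ⟨h1, he⟩)
      · exact Finset.mem_union_right _ (Finset.mem_inter.mpr ⟨h1, he⟩)
    · intro he
      rcases Finset.mem_union.mp he with he | he
      · exact (Finset.mem_inter.mp he).2
      · exact (Finset.mem_inter.mp he).2
  have hdisj : Disjoint (M ∩ compE M M' u) (M' ∩ compE M M' u) := by
    rw [Finset.disjoint_left]
    intro e he hf
    have heC := (Finset.mem_inter.mp he).2
    rcases Finset.mem_symmDiff.mp (compE_subset_symmDiff heC) with ⟨_, h2⟩ | ⟨_, h2⟩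
    · exact h2 (Finset.mem_inter.mp hf).1
    · exact h2 (Finset.mem_inter.mp he).1
  conv_lhs => rw [hsplit]
  rw [Finset.card_union_of_disjoint hdisj]

/-- the component has at most `|compE| + 1` vertices -/
lemma Xf_card_le (hM : IsMatchingSet G M) (hM' : IsMatchingSet G M') :
    (Xf M M' u).card ≤ (compE M M' u).card + 1 := by
  classical
  set H := Hgr M M' with hH
  have hzspec : ∀ v ∈ (Xf M M' u).erase u,
      ∃ z, H.Adj v z ∧ H.dist u z + 1 = H.dist u v := by
    intro v hv
    have hvu : v ≠ u := Finset.ne_of_mem_erase hv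
    have hreach : H.Reachable u v := mem_Xf.mp (Finset.mem_of_mem_erase hv)
    have hd0 : H.dist u v ≠ 0 := by
      intro h0
      rcases SimpleGraph.dist_eq_zero_iff_eq_or_not_reachable.mp h0 with h | h
      · exact hvu h.symm
      · exact h hreach
    obtain ⟨p, hp⟩ := SimpleGraph.exists_walk_of_dist_ne_zero hd0
    have hlenrev : p.reverse.length = H.dist u v := by
      rw [SimpleGraph.Walk.length_reverse]; exact hp
    cases hq : p.reverse with
    | nil => exact absurd rfl hvu
    | cons hadj t =>
      rename_i z
      have hlen : t.length + 1 = H.dist u v := by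
        rw [hq] at hlenrev
        simpa using hlenrev
      refine ⟨z, hadj, ?_⟩
      have h1 : H.dist u z ≤ t.length := by
        have := SimpleGraph.dist_le t.reverse
        simpa using this
      have h2 : H.dist u v ≤ H.dist u z + 1 := by
        by_cases hz0 : H.dist u z = 0
        · rcases SimpleGraph.dist_eq_zero_iff_eq_or_not_reachable.mp hz0 with h | h
          · subst h
            have := SimpleGraph.dist_le (SimpleGraph.Walk.cons hadj.symm SimpleGraph.Walk.nil)
            simpa [SimpleGraph.dist_comm, SimpleGraph.dist_self] using this
          · exact absurd ⟨t.reverse⟩ h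
        · obtain ⟨w, hw⟩ := SimpleGraph.exists_walk_of_dist_ne_zero hz0
          have := SimpleGraph.dist_le (w.append (SimpleGraph.Walk.cons hadj.symm
            SimpleGraph.Walk.nil))
          rw [SimpleGraph.Walk.length_append, hw] at this
          simpa using this
      omega
  set zf : V → V := fun v =>
    if h : ∃ z, H.Adj v z ∧ H.dist u z + 1 = H.dist u v then h.choose else v with hzf
  have hinj : ((Xf M M' u).erase u).card ≤ (compE M M' u).card := by
    apply Finset.card_le_card_of_injOn (fun v => s(v, zf v))
    · intro v hv
      obtain ⟨z, hz⟩ := hzspec v hv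
      have hex : ∃ z, H.Adj v z ∧ H.dist u z + 1 = H.dist u v := ⟨z, hz⟩
      have hspec := hex.choose_spec
      have hzfv : zf v = hex.choose := by rw [hzf]; simp [hex]
      simp only [hzfv]
      have hadj : H.Adj v hex.choose := hspec.1
      have hmem : s(v, hex.choose) ∈ M ∆ M' := hadj.2
      exact (mem_compE_of_mem_symmDiff hM hM' hmem (Sym2.mem_mk_left _ _)
        (Finset.mem_of_mem_erase hv)).1
    · intro v hv w hw heq
      have hvspec : H.Adj v (zf v) ∧ H.dist u (zf v) + 1 = H.dist u v := by
        obtain ⟨z, hz⟩ := hzspec v hv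
        have hex : ∃ z, H.Adj v z ∧ H.dist u z + 1 = H.dist u v := ⟨z, hz⟩
        have := hex.choose_spec
        rw [hzf]; simpa [hex] using this
      have hwspec : H.Adj w (zf w) ∧ H.dist u (zf w) + 1 = H.dist u w := by
        obtain ⟨z, hz⟩ := hzspec w hw
        have hex : ∃ z, H.Adj w z ∧ H.dist u z + 1 = H.dist u w := ⟨z, hz⟩
        have := hex.choose_spec
        rw [hzf]; simpa [hex] using this
      rcases Sym2.eq_iff.mp heq with ⟨h1, h2⟩ | ⟨h1, h2⟩
      · exact h1
      · exfalso
        have e1 := hvspec.2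
        have e2 := hwspec.2
        rw [h2] at e1
        rw [← h1] at e2
        omega
  have hu' : u ∈ Xf M M' u := u_mem_Xf
  have := Finset.card_erase_of_mem hu'
  have hpos : 0 < (Xf M M' u).card := Finset.card_pos.mpr ⟨u, hu'⟩
  omega

end Flip

end MC
namespace MC

open Finset
open scoped symmDiff

variable {V : Type*} [Fintype V] [DecidableEq V] {G : SimpleGraph V}

/-- A maximum matching misses at most one vertex in each component of `G[D]`. -/
theorem one_exposed_per_component {M : Finset (Sym2 V)} (hM : IsMatchingSet G M)
    (hmax : ∀ N, IsMatchingSet G N → N.card ≤ M.card) {u u' : V} (hne : u ≠ u')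
    (hu : u ∉ edgeCover M) (hu' : u' ∉ edgeCover M)
    (hr : (indOn G (Dset G)).Reachable u u') : False := by
  classical
  set GD := indOn G (Dset G) with hGD
  suffices key : ∀ m : ℕ, ∀ (M : Finset (Sym2 V)) (u u' : V), IsMatchingSet G M →
      (∀ N, IsMatchingSet G N → N.card ≤ M.card) → u ≠ u' → u ∉ edgeCover M →
      u' ∉ edgeCover M → GD.Reachable u u' → GD.dist u u' ≤ m → False by
    exact key (GD.dist u u') M u u' hM hmax hne hu hu' hr le_rfl
  clear hM hmax hne hu hu' hr
  clear! M u u'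
  intro m
  induction m with
  | zero =>
    intro M u u' _ _ hne _ _ hr hd
    rcases SimpleGraph.dist_eq_zero_iff_eq_or_not_reachable.mp (Nat.le_zero.mp hd) with h | h
    · exact hne h
    · exact h hr
  | succ m ih =>
    intro M u u' hM hmax hne hu hu' hr hd
    have hd0 : GD.dist u u' ≠ 0 := by
      intro h0
      rcases SimpleGraph.dist_eq_zero_iff_eq_or_not_reachable.mp h0 with h | h
      · exact hne h
      · exact h hr
    obtain ⟨p, hp⟩ := SimpleGraph.exists_walk_of_dist_ne_zero hd0
    cases hpq : p with
    | nil => exact hne rfl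
    | cons hadj t =>
      rename_i x
      have htlen : t.length + 1 = GD.dist u u' := by
        rw [hpq] at hp
        simpa using hp
      have hxD : x ∈ Dset G := hadj.2.1
      have hGux : G.Adj u x := hadj.2.2
      have hxcov : x ∈ edgeCover M := by
        by_contra hxc
        exact augment hM hmax hu hxc hGux
      have hxu' : x ≠ u' := by
        rintro rfl
        exact hu' hxcov
      -- a maximum matching missing x, maximizing the intersection with M
      obtain ⟨M₀, hM₀, hM₀x⟩ := hxD
      have hM₀card : M₀.card = M.card := le_antisymm (hmax _ hM₀.1) (hM₀.2 M hM)
      obtain ⟨M', ⟨hM'm, hM'P⟩, hM'opt⟩ := exists_maxwt (G := G)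
        (fun N => N.card = M.card ∧ x ∉ edgeCover N) (fun N => (M ∩ N).card)
        ⟨M₀, hM₀.1, hM₀card, hM₀x⟩
      obtain ⟨hM'card, hM'x⟩ := hM'P
      have hM'max : ∀ N, IsMatchingSet G N → N.card ≤ M'.card := by
        intro N hN
        rw [hM'card]
        exact hmax N hN
      have huM' : u ∈ edgeCover M' := by
        by_contra huc
        exact augment hM'm hM'max huc hM'x hGux
      -- component quantities
      have ha_eq : (M ∩ compE M M' u).card = (M' ∩ compE M M' u).card := by
        have h1 := flip_card (M := M) (M' := M') (u := u) (N₁ := M) (N₂ := M')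
        have h2 := flip_card (M := M) (M' := M') (u := u) (N₁ := M') (N₂ := M)
        have hf1 := hmax _ (flip_matching hM hM'm hu (Or.inl ⟨rfl, rfl⟩))
        have hf2 := hmax _ (flip_matching hM hM'm hu (Or.inr ⟨rfl, rfl⟩))
        omega
      have hbpos : 1 ≤ (M' ∩ compE M M' u).card := by
        obtain ⟨e, he, hue⟩ := huM'
        have heC : e ∈ compE M M' u :=
          edge_mem_compE hM hM'm hu (Or.inr he) hue u_mem_Xf
        exact Finset.card_pos.mpr ⟨e, Finset.mem_inter.mpr ⟨he, heC⟩⟩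
      -- at most one M-exposed vertex in the component
      have hcM := count_covered hM hM'm hu hM (Or.inl rfl)
      have hXle := Xf_card_le (G := G) (u := u) hM hM'm
      rw [compE_card] at hXle
      have hsplitM := Finset.card_filter_add_card_filter_not
        (s := Xf M M' u) (p := (· ∈ edgeCover M))
      have hnegM_le1 : ((Xf M M' u).filter (· ∉ edgeCover M)).card ≤ 1 := by omega
      have hMuniq : ∀ v ∈ Xf M M' u, v ∉ edgeCover M → v = u := by
        intro v hv hvc
        have hvmem : v ∈ (Xf M M' u).filter (· ∉ edgeCover M) :=
          Finset.mem_filter.mpr ⟨hv, hvc⟩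
        have humem : u ∈ (Xf M M' u).filter (· ∉ edgeCover M) :=
          Finset.mem_filter.mpr ⟨u_mem_Xf, hu⟩
        by_contra hvu
        have : ({v, u} : Finset V).card ≤ ((Xf M M' u).filter (· ∉ edgeCover M)).card := by
          apply Finset.card_le_card
          intro z hz
          rcases Finset.mem_insert.mp hz with rfl | hz
          · exact hvmem
          · rw [Finset.mem_singleton.mp hz]; exact humem
        rw [Finset.card_pair hvu] at this
        omega
      have hu'X : u' ∉ Xf M M' u := by
        intro h
        exact hne (hMuniq u' h hu').symm
      have hreach : GD.Reachable x u' := ⟨t⟩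
      have hdxu' : GD.dist x u' ≤ m := by
        have := SimpleGraph.dist_le t
        omega
      by_cases hxX : x ∈ Xf M M' u
      · -- flip M along the component; x becomes exposed
        set Ms := flipM M M' u M M' with hMs
        have hMsm : IsMatchingSet G Ms := flip_matching hM hM'm hu (Or.inl ⟨rfl, rfl⟩)
        have hMscard : Ms.card = M.card := by
          have h1 := flip_card (M := M) (M' := M') (u := u) (N₁ := M) (N₂ := M')
          rw [← hMs] at h1
          omega
        have hMsmax : ∀ N, IsMatchingSet G N → N.card ≤ Ms.card := by
          intro N hN
          rw [hMscard]
          exact hmax N hN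
        have hxMs : x ∉ edgeCover Ms := by
          rw [flip_cover_in hM hM'm hu (Or.inl ⟨rfl, rfl⟩) hxX]
          exact hM'x
        have hu'Ms : u' ∉ edgeCover Ms := by
          rw [flip_cover_out hM hM'm hu'X]
          exact hu'
        exact ih Ms x u' hMsm hMsmax hxu' hxMs hu'Ms hreach hdxu'
      · -- x outside the component: flipping M' improves the intersection with M
        set Ms := flipM M M' u M' M with hMs
        have hMsm : IsMatchingSet G Ms := flip_matching hM hM'm hu (Or.inr ⟨rfl, rfl⟩)
        have hMscard : Ms.card = M.card := by
          have h2 := flip_card (M := M) (M' := M') (u := u) (N₁ := M') (N₂ := M)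
          rw [← hMs] at h2
          omega
        have hxMs : x ∉ edgeCover Ms := by
          rw [flip_cover_out hM hM'm hxX]
          exact hM'x
        have hsub : (M ∩ M') ∪ (M ∩ compE M M' u) ⊆ M ∩ Ms := by
          intro e he
          rcases Finset.mem_union.mp he with he | he
          · obtain ⟨heM, heM'⟩ := Finset.mem_inter.mp he
            have heC : e ∉ compE M M' u := by
              intro hC
              rcases Finset.mem_symmDiff.mp (compE_subset_symmDiff hC) with ⟨_, h2⟩ | ⟨_, h2⟩
              · exact h2 heM'
              · exact h2 heM
            exact Finset.mem_inter.mpr ⟨heM,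
              Finset.mem_union_left _ (Finset.mem_sdiff.mpr ⟨heM', heC⟩)⟩
          · obtain ⟨heM, heC⟩ := Finset.mem_inter.mp he
            exact Finset.mem_inter.mpr ⟨heM, Finset.mem_union_right _ he⟩
        have hdisj : Disjoint (M ∩ M') (M ∩ compE M M' u) := by
          rw [Finset.disjoint_left]
          intro e he hf
          have heC := (Finset.mem_inter.mp hf).2
          rcases Finset.mem_symmDiff.mp (compE_subset_symmDiff heC) with ⟨_, h2⟩ | ⟨_, h2⟩
          · exact h2 (Finset.mem_inter.mp he).2
          · exact h2 (Finset.mem_inter.mp he).1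
        have hcardle : (M ∩ M').card + (M ∩ compE M M' u).card ≤ (M ∩ Ms).card := by
          rw [← Finset.card_union_of_disjoint hdisj]
          exact Finset.card_le_card hsub
        have hopt := hM'opt Ms hMsm ⟨hMscard, hxMs⟩
        omega

end MC
namespace MC

open Finset

variable {V : Type*} [Fintype V] [DecidableEq V] {G : SimpleGraph V}

theorem cover_of_dcover {k : ℕ} (hk : 2 ≤ k)
    (hS : ∃ Mc, IsKMatchingDCover (Gstar G) (DstarSet G) k Mc) :
    ∃ Mc, IsKMatchingCover G k Mc := by
  classical
  obtain ⟨Mc, ⟨⟨g, hg, hMc⟩, hcov⟩⟩ := hS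
  -- extraction of assignment d ↦ (φ d, color)
  have hspec : ∀ d, d ∈ DstarSet G →
      ∃ x, G.Adj d x ∧ x ∈ Aset G ∧ ∃ i : Fin k, s(d, x) ∈ g i := by
    intro d hd
    obtain ⟨e, he, hde⟩ := hcov d hd
    rw [hMc] at he
    obtain ⟨i, _, hei⟩ := Finset.mem_biUnion.mp he
    have heG : e ∈ (Gstar G).edgeSet := (hg i).1 e hei
    obtain ⟨x, rfl⟩ := Sym2.mem_iff_exists.mp hde
    have hadj : (Gstar G).Adj d x := (SimpleGraph.mem_edgeSet (Gstar G)).mp heG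
    have hGdx : G.Adj d x := hadj.1
    have hxA : x ∈ Aset G := by
      rcases hadj.2 with ⟨hdA, _⟩ | ⟨_, hxA⟩
      · exact absurd (Dstar_subset_Dset hd) hdA.1
      · exact hxA
    exact ⟨x, hGdx, hxA, i, hei⟩
  set φ : V → V := fun d => if h : d ∈ DstarSet G then (hspec d h).choose else d with hφdef
  set cf : V → Fin k := fun d => if h : d ∈ DstarSet G then
    (hspec d h).choose_spec.2.2.choose else ⟨0, by omega⟩ with hcfdef
  have hφ : ∀ d, d ∈ DstarSet G →
      G.Adj d (φ d) ∧ φ d ∈ Aset G ∧ s(d, φ d) ∈ g (cf d) := by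
    intro d hd
    have h1 := (hspec d hd).choose_spec
    have h2 := h1.2.2.choose_spec
    rw [hφdef, hcfdef]
    simp only [dif_pos hd]
    exact ⟨h1.1, h1.2.1, h2⟩
  set Fphi : Finset (Sym2 V) :=
    (Finset.univ.filter (· ∈ DstarSet G)).image (fun d => s(d, φ d)) with hFphi
  -- pick a maximum matching maximizing the intersection with Fphi
  obtain ⟨M, ⟨hM, -⟩, hMopt⟩ := exists_maxwt (G := G) (fun _ => True)
    (fun N => N.card * (Fphi.card + 1) + (N ∩ Fphi).card) ⟨∅, matching_empty, trivial⟩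
  have hIbound : ∀ N : Finset (Sym2 V), (N ∩ Fphi).card ≤ Fphi.card :=
    fun N => Finset.card_le_card (Finset.inter_subset_right)
  have hmax : ∀ N, IsMatchingSet G N → N.card ≤ M.card := by
    intro N hN
    have hw := hMopt N hN trivial
    by_contra hc
    push_neg at hc
    have h2 : (M.card + 1) * (Fphi.card + 1) ≤ N.card * (Fphi.card + 1) :=
      Nat.mul_le_mul_right _ hc
    rw [add_mul, one_mul] at h2
    have h3 := hIbound M
    linarith
  have hint : ∀ N, IsMatchingSet G N → N.card = M.card →
      (N ∩ Fphi).card ≤ (M ∩ Fphi).card := by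
    intro N hN hNc
    have hw := hMopt N hN trivial
    rw [hNc] at hw
    linarith
  -- exposed vertices
  set Pf : Finset V := Finset.univ.filter
    (fun d => d ∈ DstarSet G ∧ d ∉ edgeCover M) with hPf
  set Qf : Finset V := Finset.univ.filter
    (fun v => v ∉ edgeCover M ∧ v ∉ DstarSet G) with hQf
  set L : V → Finset V := fun a => Pf.filter (fun d => φ d = a) with hL
  have hPfD : ∀ d ∈ Pf, d ∈ DstarSet G ∧ d ∉ edgeCover M := by
    intro d hd
    rw [hPf] at hd
    simpa using hd
  -- the degree bound at the centers
  have hLle : ∀ a, (L a).card ≤ k - 1 := by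
    intro a
    by_contra hLc
    push_neg at hLc
    set Λ : Finset V := Finset.univ.filter
      (fun d => d ∈ DstarSet G ∧ φ d = a) with hΛ
    have hLsub : L a ⊆ Λ := by
      intro d hd
      rw [hL] at hd
      simp only [Finset.mem_filter] at hd
      obtain ⟨hdP, hdφ⟩ := hd
      rw [hΛ]
      simp only [Finset.mem_filter, Finset.mem_univ, true_and]
      exact ⟨(hPfD d hdP).1, hdφ⟩
    have hΛk : Λ.card ≤ k := by
      have : Λ.card ≤ (Finset.univ : Finset (Fin k)).card := by
        apply Finset.card_le_card_of_injOn cf (fun d _ => Finset.mem_univ _)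
        intro d hd d' hd' hcf
        simp only [hΛ, Finset.coe_filter, Set.mem_setOf_eq] at hd hd'
        obtain ⟨_, hdD, hdφ⟩ := hd
        obtain ⟨_, hd'D, hd'φ⟩ := hd'
        by_contra hdd
        have h1 : s(d, a) ∈ g (cf d) := by
          have := (hφ d hdD).2.2; rwa [hdφ] at this
        have h2 : s(d', a) ∈ g (cf d) := by
          have := (hφ d' hd'D).2.2; rwa [hd'φ, ← hcf] at this
        have hne : s(d, a) ≠ s(d', a) := by
          intro h
          rcases Sym2.eq_iff.mp h with ⟨h1, _⟩ | ⟨h1, h2⟩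
          · exact hdd h1
          · exact hdd (h1.trans h2)
        exact (hg (cf d)).2 _ h1 _ h2 hne a (Sym2.mem_mk_right d a) (Sym2.mem_mk_right d' a)
      simpa using this
    have hLeq : L a = Λ := Finset.eq_of_subset_of_card_le hLsub (by omega)
    have hLne : (L a).Nonempty := Finset.card_pos.mp (by omega)
    obtain ⟨d₀, hd₀⟩ := hLne
    have hd₀' : d₀ ∈ Pf ∧ φ d₀ = a := by
      rw [hL] at hd₀
      simpa using hd₀
    obtain ⟨hd₀P, hd₀φ⟩ := hd₀'
    obtain ⟨hd₀D, hd₀unc⟩ := hPfD d₀ hd₀P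
    have haA : a ∈ Aset G := by
      have := (hφ d₀ hd₀D).2.1; rwa [hd₀φ] at this
    have haDset : a ∉ Dset G := haA.1
    have hacov : a ∈ edgeCover M := by
      by_contra h
      exact haDset (uncovered_mem_Dset hM hmax h)
    obtain ⟨ea, hea, haea⟩ := hacov
    obtain ⟨v, heav, hGav⟩ := edge_through hM hea haea
    have hvcov : v ∈ edgeCover M := ⟨ea, hea, by rw [heav]; exact Sym2.mem_mk_right a v⟩
    have hvnL : v ∉ L a := by
      intro h
      rw [hL] at h
      simp only [Finset.mem_filter] at h
      exact (hPfD v h.1).2 hvcov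
    have heanF : ea ∉ Fphi := by
      intro hF
      rw [hFphi] at hF
      simp only [Finset.mem_image, Finset.mem_filter, Finset.mem_univ, true_and] at hF
      obtain ⟨d, hdD, hd⟩ := hF
      rw [heav] at hd
      rcases Sym2.eq_iff.mp hd with ⟨h1, _⟩ | ⟨h1, h2⟩
      · exact haDset (Dstar_subset_Dset (h1 ▸ hdD))
      · apply hvnL
        rw [hLeq, hΛ]
        simp only [Finset.mem_filter, Finset.mem_univ, true_and]
        exact ⟨h1 ▸ hdD, h1 ▸ h2⟩
    have hGad₀ : G.Adj a d₀ := by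
      have := (hφ d₀ hd₀D).1; rw [hd₀φ] at this; exact this.symm
    set M₁ : Finset (Sym2 V) := insert s(a, d₀) (M.erase ea) with hM₁
    have hnew_not : s(a, d₀) ∉ M := by
      intro h
      exact hd₀unc ⟨_, h, Sym2.mem_mk_right a d₀⟩
    have hM₁m : IsMatchingSet G M₁ := by
      constructor
      · intro e he
        rcases Finset.mem_insert.mp he with rfl | he
        · exact (SimpleGraph.mem_edgeSet G).mpr hGad₀
        · exact hM.1 e (Finset.mem_of_mem_erase he)
      · intro e he f hf hnef w hwe hwf
        have key : ∀ f' ∈ M.erase ea, ∀ w', w' ∈ s(a, d₀) → w' ∉ f' := by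
          intro f' hf' w' hw1 hw2
          rcases Sym2.mem_iff.mp hw1 with rfl | rfl
          · have : f' = ea := eq_of_mem hM (Finset.mem_of_mem_erase hf') hea hw2 haea
            exact (Finset.ne_of_mem_erase hf') this
          · exact hd₀unc ⟨f', Finset.mem_of_mem_erase hf', hw2⟩
        rcases Finset.mem_insert.mp he with he' | he'
        · subst he'
          rcases Finset.mem_insert.mp hf with hf' | hf'
          · exact hnef hf'.symm
          · exact key f hf' w hwe hwf
        · rcases Finset.mem_insert.mp hf with hf' | hf'
          · subst hf'
            exact key e he' w hwf hwe
          · exact hM.2 e (Finset.mem_of_mem_erase he') f (Finset.mem_of_mem_erase hf')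
              hnef w hwe hwf
    have hM₁card : M₁.card = M.card := by
      rw [hM₁, Finset.card_insert_of_notMem
        (fun h => hnew_not (Finset.mem_of_mem_erase h)), Finset.card_erase_of_mem hea]
      have : 1 ≤ M.card := Finset.card_pos.mpr ⟨ea, hea⟩
      omega
    have hint₁ := hint M₁ hM₁m hM₁card
    have hsub1 : insert s(a, d₀) (M ∩ Fphi) ⊆ M₁ ∩ Fphi := by
      intro e he
      rcases Finset.mem_insert.mp he with rfl | he
      · refine Finset.mem_inter.mpr ⟨Finset.mem_insert_self _ _, ?_⟩
        rw [hFphi]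
        apply Finset.mem_image.mpr
        refine ⟨d₀, by simp [hd₀D], ?_⟩
        rw [hd₀φ, Sym2.eq_swap]
      · obtain ⟨heM, heF⟩ := Finset.mem_inter.mp he
        have hene : e ≠ ea := fun h => heanF (h ▸ heF)
        exact Finset.mem_inter.mpr
          ⟨Finset.mem_insert_of_mem (Finset.mem_erase.mpr ⟨hene, heM⟩), heF⟩
    have hgrow : (M ∩ Fphi).card + 1 ≤ (M₁ ∩ Fphi).card := by
      have h1 : s(a, d₀) ∉ M ∩ Fphi := fun h => hnew_not (Finset.mem_inter.mp h).1
      calc (M ∩ Fphi).card + 1 = (insert s(a, d₀) (M ∩ Fphi)).card := by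
            rw [Finset.card_insert_of_notMem h1]
        _ ≤ (M₁ ∩ Fphi).card := Finset.card_le_card hsub1
    omega
  -- targets for the non-D* exposed vertices
  have hQspec : ∀ v ∈ Qf, ∃ w, (indOn G (Dset G)).Adj v w ∧ w ∈ edgeCover M := by
    intro v hv
    rw [hQf] at hv
    simp only [Finset.mem_filter, Finset.mem_univ, true_and] at hv
    obtain ⟨hvunc, hvnD⟩ := hv
    have hvD : v ∈ Dset G := uncovered_mem_Dset hM hmax hvunc
    have : ∃ w, (indOn G (Dset G)).Adj v w := by
      by_contra h
      push_neg at h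
      exact hvnD ⟨hvD, h⟩
    obtain ⟨w, hw⟩ := this
    refine ⟨w, hw, ?_⟩
    by_contra hwc
    exact augment hM hmax hvunc hwc hw.2.2
  set wc : V → V := fun v => if h : v ∈ Qf then (hQspec v h).choose else v with hwcdef
  have hwc : ∀ v ∈ Qf, (indOn G (Dset G)).Adj v (wc v) ∧ wc v ∈ edgeCover M := by
    intro v hv
    have := (hQspec v hv).choose_spec
    rw [hwcdef]
    simpa [dif_pos hv] using this
  have hQfunc : ∀ v ∈ Qf, v ∉ edgeCover M := by
    intro v hv
    rw [hQf] at hv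
    simpa using (Finset.mem_filter.mp hv).2.1
  have hwcinj : ∀ v ∈ Qf, ∀ v' ∈ Qf, wc v = wc v' → v = v' := by
    intro v hv v' hv' heq
    by_contra hne
    have h1 := (hwc v hv).1
    have h2 := (hwc v' hv').1
    rw [heq] at h1
    have hreach : (indOn G (Dset G)).Reachable v v' :=
      h1.reachable.trans h2.reachable.symm
    exact one_exposed_per_component hM hmax hne (hQfunc v hv) (hQfunc v' hv') hreach
  -- color of a pendant at a center
  set chi : V → ℕ := fun d => (L (φ d)).toList.idxOf d with hchidef
  have hchilt : ∀ d ∈ Pf, chi d < k - 1 := by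
    intro d hd
    have hdL : d ∈ L (φ d) := by
      rw [hL]; exact Finset.mem_filter.mpr ⟨hd, rfl⟩
    have h1 : chi d < (L (φ d)).toList.length := by
      rw [hchidef]
      exact List.idxOf_lt_length_iff.mpr (Finset.mem_toList.mpr hdL)
    rw [Finset.length_toList] at h1
    have h2 := hLle (φ d)
    have h3 : 0 < (L (φ d)).card := Finset.card_pos.mpr ⟨d, hdL⟩
    omega
  have hchiinj : ∀ d ∈ Pf, ∀ d' ∈ Pf, φ d = φ d' → chi d = chi d' → d = d' := by
    intro d hd d' hd' hφeq hchieq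
    have hdL : d ∈ L (φ d) := by
      rw [hL]; exact Finset.mem_filter.mpr ⟨hd, rfl⟩
    have hd'L : d' ∈ L (φ d) := by
      rw [hL]; exact Finset.mem_filter.mpr ⟨hd', hφeq.symm⟩
    rw [hchidef] at hchieq
    simp only at hchieq
    rw [hφeq] at hdL
    rw [← hφeq] at hchieq
    exact (List.idxOf_inj (Finset.mem_toList.mpr (hφeq ▸ hdL))).mp hchieq
  -- facts about vertex classes
  have hPfDset : ∀ d ∈ Pf, d ∈ Dset G := fun d hd => Dstar_subset_Dset (hPfD d hd).1
  have hφA : ∀ d ∈ Pf, φ d ∉ Dset G := fun d hd => ((hφ d (hPfD d hd).1).2.1).1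
  have hQfD : ∀ v ∈ Qf, v ∈ Dset G := by
    intro v hv
    exact (hwc v hv).1.1
  have hwcD : ∀ v ∈ Qf, wc v ∈ Dset G := fun v hv => (hwc v hv).1.2.1
  have hwccov : ∀ v ∈ Qf, wc v ∈ edgeCover M := fun v hv => (hwc v hv).2
  have hPfnotQf : ∀ d ∈ Pf, ∀ v ∈ Qf, d ≠ v := by
    intro d hd v hv h
    subst h
    rw [hQf] at hv
    exact (by simpa using (Finset.mem_filter.mp hv).2.2 : d ∉ DstarSet G) (hPfD d hd).1
  -- the k matchings
  set f0 : ℕ → Finset (Sym2 V) := fun n =>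
    if n = 0 then M
    else (Pf.filter (fun d => chi d + 1 = n)).image (fun d => s(d, φ d))
      ∪ (if n = 1 then Qf.image (fun v => s(v, wc v)) else ∅) with hf0def
  set f : Fin k → Finset (Sym2 V) := fun j => f0 j.val with hfdef
  have hfm0 : ∀ n : ℕ, IsMatchingSet G (f0 n) := by
    intro n
    rw [hf0def]
    by_cases hj0 : n = 0
    · simpa [hj0] using hM
    · simp only [if_neg hj0]
      have hmemchar : ∀ e, e ∈ (Pf.filter (fun d => chi d + 1 = n)).image
          (fun d => s(d, φ d)) ∪ (if n = 1 then Qf.image (fun v => s(v, wc v)) else ∅) →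
          (∃ d ∈ Pf, chi d + 1 = n ∧ e = s(d, φ d)) ∨ (∃ v ∈ Qf, e = s(v, wc v)) := by
        intro e he
        rcases Finset.mem_union.mp he with he | he
        · obtain ⟨d, hd, hde⟩ := Finset.mem_image.mp he
          obtain ⟨hdP, hdchi⟩ := Finset.mem_filter.mp hd
          exact Or.inl ⟨d, hdP, hdchi, hde.symm⟩
        · by_cases hj1 : n = 1
          · rw [if_pos hj1] at he
            obtain ⟨v, hv, hve⟩ := Finset.mem_image.mp he
            exact Or.inr ⟨v, hv, hve.symm⟩
          · rw [if_neg hj1] at he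
            exact absurd he (Finset.notMem_empty e)
      constructor
      · intro e he
        rcases hmemchar e he with ⟨d, hd, _, rfl⟩ | ⟨v, hv, rfl⟩
        · exact (SimpleGraph.mem_edgeSet G).mpr (hφ d (hPfD d hd).1).1
        · exact (SimpleGraph.mem_edgeSet G).mpr (hwc v hv).1.2.2
      · intro e he e' he' hne w hwe hwe'
        have hPunc : ∀ d ∈ Pf, d ∉ edgeCover M := fun d hd => (hPfD d hd).2
        rcases hmemchar e he with ⟨d, hd, hdchi, rfl⟩ | ⟨v, hv, rfl⟩ <;>
          rcases hmemchar e' he' with ⟨d', hd', hd'chi, rfl⟩ | ⟨v', hv', rfl⟩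
        · -- two pendant edges at centers
          have hddne : d ≠ d' := by
            intro h
            exact hne (by rw [h])
          have hφne : φ d ≠ φ d' := by
            intro h
            exact hddne (hchiinj d hd d' hd' h (by omega))
          rcases Sym2.mem_iff.mp hwe with h1 | h1 <;>
            rcases Sym2.mem_iff.mp hwe' with h2 | h2
          · exact hddne (h1.symm.trans h2)
          · exact hφA d' hd' (by rw [← h2, h1]; exact hPfDset d hd)
          · exact hφA d hd (by rw [← h1, h2]; exact hPfDset d' hd')
          · exact hφne (h1.symm.trans h2)
        · rcases Sym2.mem_iff.mp hwe with h1 | h1 <;>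
            rcases Sym2.mem_iff.mp hwe' with h2 | h2
          · exact hPfnotQf d hd v' hv' (h1.symm.trans h2)
          · exact hPunc d hd (by rw [h1.symm.trans h2]; exact hwccov v' hv')
          · exact hφA d hd (by rw [h1.symm.trans h2]; exact hQfD v' hv')
          · exact hφA d hd (by rw [h1.symm.trans h2]; exact hwcD v' hv')
        · rcases Sym2.mem_iff.mp hwe with h1 | h1 <;>
            rcases Sym2.mem_iff.mp hwe' with h2 | h2
          · exact hPfnotQf d' hd' v hv (h2.symm.trans h1)
          · exact hφA d' hd' (by rw [h2.symm.trans h1]; exact hQfD v hv)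
          · exact hPunc d' hd' (by rw [h2.symm.trans h1]; exact hwccov v hv)
          · exact hφA d' hd' (by rw [h2.symm.trans h1]; exact hwcD v hv)
        · have hvvne : v ≠ v' := by
            intro h
            exact hne (by rw [h])
          rcases Sym2.mem_iff.mp hwe with h1 | h1 <;>
            rcases Sym2.mem_iff.mp hwe' with h2 | h2
          · exact hvvne (h1.symm.trans h2)
          · exact hQfunc v hv (by rw [h1.symm.trans h2]; exact hwccov v' hv')
          · exact hQfunc v' hv' (by rw [h2.symm.trans h1]; exact hwccov v hv)
          · exact hvvne (hwcinj v hv v' hv' (h1.symm.trans h2))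
  have hfm : ∀ j, IsMatchingSet G (f j) := by
    intro j
    rw [hfdef]
    exact hfm0 j.val
  refine ⟨Finset.univ.biUnion f, ⟨f, hfm, rfl⟩, ?_⟩
  intro v
  by_cases hvc : v ∈ edgeCover M
  · obtain ⟨e, he, hve⟩ := hvc
    refine ⟨e, Finset.mem_biUnion.mpr ⟨⟨0, by omega⟩, Finset.mem_univ _, ?_⟩, hve⟩
    rw [hfdef]
    show e ∈ f0 0
    rw [hf0def]
    simpa using he
  · have hvD : v ∈ Dset G := uncovered_mem_Dset hM hmax hvc
    by_cases hvDs : v ∈ DstarSet G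
    · have hvP : v ∈ Pf := by
        rw [hPf]
        simp only [Finset.mem_filter, Finset.mem_univ, true_and]
        exact ⟨hvDs, hvc⟩
      have hlt : chi v + 1 < k := by
        have := hchilt v hvP
        omega
      refine ⟨s(v, φ v), Finset.mem_biUnion.mpr ⟨⟨chi v + 1, hlt⟩, Finset.mem_univ _, ?_⟩,
        Sym2.mem_mk_left _ _⟩
      rw [hfdef]
      show s(v, φ v) ∈ f0 (chi v + 1)
      rw [hf0def]
      simp only [if_neg (Nat.succ_ne_zero (chi v))]
      apply Finset.mem_union_left
      exact Finset.mem_image.mpr ⟨v, Finset.mem_filter.mpr ⟨hvP, rfl⟩, rfl⟩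
    · have hvQ : v ∈ Qf := by
        rw [hQf]
        simp only [Finset.mem_filter, Finset.mem_univ, true_and]
        exact ⟨hvc, hvDs⟩
      refine ⟨s(v, wc v), Finset.mem_biUnion.mpr ⟨⟨1, by omega⟩, Finset.mem_univ _, ?_⟩,
        Sym2.mem_mk_left _ _⟩
      rw [hfdef]
      show s(v, wc v) ∈ f0 1
      rw [hf0def]
      simp only [if_neg (one_ne_zero), if_pos rfl]
      apply Finset.mem_union_right
      exact Finset.mem_image.mpr ⟨v, hvQ, rfl⟩

end MC
/-- If `A(G) ≠ ∅` and `md(G*) ≥ 2`, then `mc(G) = md(G*)`. -/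
theorem mc_eq_md_of_two_le_md (G : SimpleGraph V) (hconn : G.Connected)
    (hA : (Aset G).Nonempty) (hmd : 2 ≤ md (Gstar G) (DstarSet G)) :
    mc G = md (Gstar G) (DstarSet G) := by
  classical
  set S : Set ℕ :=
    {k | ∃ M : Finset (Sym2 V), IsKMatchingDCover (Gstar G) (DstarSet G) k M} with hSdef
  set T : Set ℕ := {k | ∃ M : Finset (Sym2 V), IsKMatchingCover G k M} with hTdef
  have hmd_eq : md (Gstar G) (DstarSet G) = sInf S := rfl
  have hmc_eq : mc G = sInf T := rfl
  have hSne : S.Nonempty := by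
    by_contra h
    rw [Set.not_nonempty_iff_eq_empty] at h
    rw [hmd_eq, h, Nat.sInf_empty] at hmd
    omega
  have hkS : sInf S ∈ S := Nat.sInf_mem hSne
  obtain ⟨Mc0, hMc0⟩ := hkS
  -- mc ≤ md
  obtain ⟨Mcov, hMcov⟩ := MC.cover_of_dcover (G := G) (by rw [hmd_eq] at hmd; exact hmd)
    ⟨Mc0, hMc0⟩
  have hTmem : sInf S ∈ T := ⟨Mcov, hMcov⟩
  have hmcle : sInf T ≤ sInf S := Nat.sInf_le hTmem
  -- md ≤ mc
  have hTne : T.Nonempty := ⟨_, hTmem⟩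
  have hmcT : sInf T ∈ T := Nat.sInf_mem hTne
  obtain ⟨Mc, ⟨⟨g, hg, hMc⟩, hcov⟩⟩ := hmcT
  set g' : Fin (sInf T) → Finset (Sym2 V) :=
    fun i => (g i).filter (· ∈ (Gstar G).edgeSet) with hg'def
  have hg'm : ∀ i, IsMatchingSet (Gstar G) (g' i) := by
    intro i
    constructor
    · intro e he
      rw [hg'def] at he
      exact (Finset.mem_filter.mp he).2
    · intro e he f hf hne w hwe hwf
      rw [hg'def] at he hf
      exact (hg i).2 e (Finset.mem_filter.mp he).1 f (Finset.mem_filter.mp hf).1 hne w hwe hwf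
  have hdcover : IsKMatchingDCover (Gstar G) (DstarSet G) (sInf T)
      (Finset.univ.biUnion g') := by
    refine ⟨⟨g', hg'm, rfl⟩, ?_⟩
    intro d hd
    obtain ⟨e, he, hde⟩ := hcov d
    rw [hMc] at he
    obtain ⟨i, _, hei⟩ := Finset.mem_biUnion.mp he
    obtain ⟨x, rfl, hGdx⟩ := MC.edge_through (hg i) hei hde
    have hxnD : x ∉ Dset G := by
      intro hxD
      exact hd.2 x ⟨hd.1, hxD, hGdx⟩
    have hxA : x ∈ Aset G := ⟨hxnD, d, hd.1, hGdx⟩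
    have hadj : (Gstar G).Adj d x := ⟨hGdx, Or.inr ⟨hd, hxA⟩⟩
    have heg' : s(d, x) ∈ g' i := by
      rw [hg'def]
      exact Finset.mem_filter.mpr ⟨hei, (SimpleGraph.mem_edgeSet (Gstar G)).mpr hadj⟩
    exact ⟨s(d, x), Finset.mem_biUnion.mpr ⟨i, Finset.mem_univ _, heg'⟩, Sym2.mem_mk_left _ _⟩
  have hmdle : sInf S ≤ sInf T := Nat.sInf_le ⟨_, hdcover⟩
  rw [hmc_eq, hmd_eq]
  omega
end

section
/- Let H be a finite simple graph with at least one edge and no isolated vertices, each of whose connected components is a star. Then the matching cover number of H equals its maximum degree: mc(H) = Δ(H). -/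
variable {V : Type*}

variable [Fintype V] [DecidableEq V]

section AuxStar
set_option linter.unusedSectionVars false

/-- A key encoding (degree, id) lexicographically. -/
noncomputable def keyV (H : SimpleGraph V) [DecidableRel H.Adj] (x : V) : ℕ :=
  H.degree x * Fintype.card V + (Fintype.equivFin V x : ℕ)

lemma keyV_lt_of_degree_lt (H : SimpleGraph V) [DecidableRel H.Adj] {a b : V}
    (h : H.degree a < H.degree b) : keyV H a < keyV H b := by
  have ha : ((Fintype.equivFin V) a : ℕ) < Fintype.card V := (Fintype.equivFin V a).isLt
  have hb : (0:ℕ) ≤ ((Fintype.equivFin V) b : ℕ) := Nat.zero_le _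
  unfold keyV
  nlinarith [Nat.succ_le_of_lt h]

lemma keyV_inj (H : SimpleGraph V) [DecidableRel H.Adj] : Function.Injective (keyV H) := by
  intro a b h
  have hd : H.degree a = H.degree b := by
    rcases lt_trichotomy (H.degree a) (H.degree b) with h' | h' | h'
    · exact absurd h (keyV_lt_of_degree_lt H h').ne
    · exact h'
    · exact absurd h.symm (keyV_lt_of_degree_lt H h').ne
  have : ((Fintype.equivFin V) a : ℕ) = ((Fintype.equivFin V) b : ℕ) := by
    unfold keyV at h; rw [hd] at h; omega
  exact (Fintype.equivFin V).injective (Fin.ext this)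

/-- The endpoint of an edge with the larger key. -/
noncomputable def ctrE (H : SimpleGraph V) [DecidableRel H.Adj] : Sym2 V → V :=
  Sym2.lift ⟨fun a b => if keyV H a < keyV H b then b else a, by
    intro a b
    dsimp only
    rcases lt_trichotomy (keyV H a) (keyV H b) with h | h | h
    · rw [if_pos h, if_neg (asymm h)]
    · have : a = b := keyV_inj H h; subst this; rfl
    · rw [if_neg (asymm h), if_pos h]⟩

/-- The endpoint of an edge with the smaller key. -/
noncomputable def leafE (H : SimpleGraph V) [DecidableRel H.Adj] : Sym2 V → V :=
  Sym2.lift ⟨fun a b => if keyV H a < keyV H b then a else b, by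
    intro a b
    dsimp only
    rcases lt_trichotomy (keyV H a) (keyV H b) with h | h | h
    · rw [if_pos h, if_neg (asymm h)]
    · have : a = b := keyV_inj H h; subst this; rfl
    · rw [if_neg (asymm h), if_pos h]⟩

lemma ctrE_leafE_eq (H : SimpleGraph V) [DecidableRel H.Adj] (e : Sym2 V) :
    e = s(ctrE H e, leafE H e) := by
  induction e using Sym2.ind with
  | _ a b =>
    simp only [ctrE, leafE, Sym2.lift_mk]
    split_ifs with h
    · exact Sym2.eq_swap
    · rfl

lemma ctrE_mk (H : SimpleGraph V) [DecidableRel H.Adj] {c l : V}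
    (h : keyV H l < keyV H c) : ctrE H s(c, l) = c := by
  simp only [ctrE, Sym2.lift_mk, if_neg (asymm h)]

lemma leafE_mk (H : SimpleGraph V) [DecidableRel H.Adj] {c l : V}
    (h : keyV H l < keyV H c) : leafE H s(c, l) = l := by
  simp only [leafE, Sym2.lift_mk, if_neg (asymm h)]

/-- The index of an edge among the edges at its center. -/
noncomputable def idxE (H : SimpleGraph V) [DecidableRel H.Adj] (e : Sym2 V) : ℕ :=
  (H.neighborFinset (ctrE H e)).toList.idxOf (leafE H e)

lemma idxE_lt_maxDegree (H : SimpleGraph V) [DecidableRel H.Adj] {e : Sym2 V}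
    (he : e ∈ H.edgeSet) : idxE H e < H.maxDegree := by
  have hadj : H.Adj (ctrE H e) (leafE H e) := by
    rw [← SimpleGraph.mem_edgeSet, ← ctrE_leafE_eq]; exact he
  have hmem : leafE H e ∈ (H.neighborFinset (ctrE H e)).toList := by
    rw [Finset.mem_toList, SimpleGraph.mem_neighborFinset]; exact hadj
  calc idxE H e < (H.neighborFinset (ctrE H e)).toList.length :=
        List.idxOf_lt_length_iff.2 hmem
    _ = H.degree (ctrE H e) := by
        rw [Finset.length_toList, SimpleGraph.card_neighborFinset_eq_degree]
    _ ≤ H.maxDegree := H.degree_le_maxDegree _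

/-- Degree-one lemma: if all neighbours of `x` equal `c` and `x` is adjacent to `c`,
then `x` has degree 1. -/
lemma degree_eq_one_aux (H : SimpleGraph V) [DecidableRel H.Adj] {x c : V}
    (hsub : ∀ u : V, H.Adj x u → u = c) (hadj : H.Adj x c) : H.degree x = 1 := by
  have : H.neighborFinset x = {c} := by
    ext u
    simp only [SimpleGraph.mem_neighborFinset, Finset.mem_singleton]
    exact ⟨fun h => hsub u h, fun h => h ▸ hadj⟩
  rw [← SimpleGraph.card_neighborFinset_eq_degree, this, Finset.card_singleton]

/-- The key matching lemma: two distinct edges sharing a vertex in a star forest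
have the same center and different indices. -/
lemma idx_ne_of_shared (H : SimpleGraph V) [DecidableRel H.Adj]
    (hstar : ∀ v : V, ∃ c : V, H.Reachable c v ∧
      (∀ u : V, H.Reachable u v → u = c ∨ H.Adj c u) ∧
      ∀ a b : V, H.Adj a b → H.Reachable a v → (a = c ∨ b = c))
    {e g : Sym2 V} (he : e ∈ H.edgeSet) (hg : g ∈ H.edgeSet) (hne : e ≠ g)
    {v : V} (hve : v ∈ e) (hvg : v ∈ g) : idxE H e ≠ idxE H g := by
  obtain ⟨a, rfl⟩ := Sym2.mem_iff_exists.1 hve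
  obtain ⟨b, rfl⟩ := Sym2.mem_iff_exists.1 hvg
  rw [SimpleGraph.mem_edgeSet] at he hg
  obtain ⟨c, hreach, hP2, hP3⟩ := hstar v
  by_cases hvc : v = c
  · have he' : H.Adj c a := hvc ▸ he
    have hg' : H.Adj c b := hvc ▸ hg
    have hab : a ≠ b := fun h => hne (by rw [h])
    have hac : a ≠ c := fun h => (H.irrefl : ¬H.Adj c c) (h ▸ he')
    have hbc : b ≠ c := fun h => (H.irrefl : ¬H.Adj c c) (h ▸ hg')
    have hdc : 2 ≤ H.degree c := by
      have hsub : ({a, b} : Finset V) ⊆ H.neighborFinset c := by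
        intro u hu
        rcases Finset.mem_insert.1 hu with h | h
        · subst h; exact (SimpleGraph.mem_neighborFinset _ _ _).2 he'
        · rw [Finset.mem_singleton] at h; subst h
          exact (SimpleGraph.mem_neighborFinset _ _ _).2 hg'
      calc 2 = ({a, b} : Finset V).card := (Finset.card_pair hab).symm
        _ ≤ (H.neighborFinset c).card := Finset.card_le_card hsub
        _ = H.degree c := SimpleGraph.card_neighborFinset_eq_degree _ _
    have hra : H.Reachable a v := hvc ▸ (H.adj_symm he').reachable
    have hrb : H.Reachable b v := hvc ▸ (H.adj_symm hg').reachable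
    have hda : H.degree a = 1 := degree_eq_one_aux H
      (fun u hu => (hP3 a u hu hra).resolve_left hac) (H.adj_symm he')
    have hdb : H.degree b = 1 := degree_eq_one_aux H
      (fun u hu => (hP3 b u hu hrb).resolve_left hbc) (H.adj_symm hg')
    have hka : keyV H a < keyV H c := keyV_lt_of_degree_lt H (by omega)
    have hkb : keyV H b < keyV H c := keyV_lt_of_degree_lt H (by omega)
    intro hidx
    rw [hvc] at hidx
    unfold idxE at hidx
    rw [ctrE_mk H hka, leafE_mk H hka, ctrE_mk H hkb, leafE_mk H hkb] at hidx
    have hma : a ∈ (H.neighborFinset c).toList := by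
      rw [Finset.mem_toList, SimpleGraph.mem_neighborFinset]; exact he'
    have hmb : b ∈ (H.neighborFinset c).toList := by
      rw [Finset.mem_toList, SimpleGraph.mem_neighborFinset]; exact hg'
    exact hab ((List.idxOf_inj hma (y := b)).1 hidx)
  · have ha : a = c := (hP3 v a he (SimpleGraph.Reachable.refl v)).resolve_left hvc
    have hb : b = c := (hP3 v b hg (SimpleGraph.Reachable.refl v)).resolve_left hvc
    exact absurd (by rw [ha, hb]) hne

end AuxStar

/-- a graph with at least one edge, no isolated vertices, all of whose
components are stars, has matching cover number equal to its maximum degree. -/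
theorem mc_star_forest_eq_maxDegree (H : SimpleGraph V) [DecidableRel H.Adj]
    (hedge : ∃ a b : V, H.Adj a b)
    (hiso : ∀ v : V, ∃ u : V, H.Adj v u)
    (hstar : ∀ v : V, ∃ c : V, H.Reachable c v ∧
      (∀ u : V, H.Reachable u v → u = c ∨ H.Adj c u) ∧
      ∀ a b : V, H.Adj a b → H.Reachable a v → (a = c ∨ b = c)) :
    mc H = H.maxDegree := by
  classical
  obtain ⟨a0, b0, hab0⟩ := hedge
  have hV : Nonempty V := ⟨a0⟩
  -- Upper bound: a maxDegree-matching cover exists.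
  have hmemS : H.maxDegree ∈ {k | ∃ M : Finset (Sym2 V), IsKMatchingCover H k M} := by
    refine ⟨Finset.univ.biUnion
      (fun i : Fin H.maxDegree => H.edgeFinset.filter (fun e => idxE H e = (i : ℕ))), ?_, ?_⟩
    · refine ⟨fun i => H.edgeFinset.filter (fun e => idxE H e = (i : ℕ)),
        fun i => ⟨?_, ?_⟩, rfl⟩
      · intro e he
        exact SimpleGraph.mem_edgeFinset.1 (Finset.mem_filter.1 he).1
      · intro e he g hg hef v hve hvg
        obtain ⟨he1, he2⟩ := Finset.mem_filter.1 he
        obtain ⟨hg1, hg2⟩ := Finset.mem_filter.1 hg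
        exact idx_ne_of_shared H hstar (SimpleGraph.mem_edgeFinset.1 he1)
          (SimpleGraph.mem_edgeFinset.1 hg1) hef hve hvg (he2.trans hg2.symm)
    · intro v
      obtain ⟨u, hu⟩ := hiso v
      have he : s(v, u) ∈ H.edgeSet := hu
      have hidx : idxE H s(v, u) < H.maxDegree := idxE_lt_maxDegree H he
      refine ⟨s(v, u), ?_, Sym2.mem_mk_left v u⟩
      refine Finset.mem_biUnion.2 ⟨⟨idxE H s(v, u), hidx⟩, Finset.mem_univ _, ?_⟩
      exact Finset.mem_filter.2 ⟨SimpleGraph.mem_edgeFinset.2 he, rfl⟩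
  -- Lower bound
  have hlow : ∀ k ∈ {k | ∃ M : Finset (Sym2 V), IsKMatchingCover H k M},
      H.maxDegree ≤ k := by
    intro k hk
    obtain ⟨M, ⟨f, hmatch, hMeq⟩, hcov⟩ := hk
    obtain ⟨c, hc⟩ := H.exists_maximal_degree_vertex
    -- every neighbour of c has c as its only neighbour
    have hnbr : ∀ u, H.Adj c u → ∀ w, H.Adj u w → w = c := by
      intro u hu w hw
      by_cases h2 : 2 ≤ H.degree c
      · obtain ⟨c0, hreach, hP2, hP3⟩ := hstar c
        have hcc0 : c = c0 := by
          by_contra hne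
          have hall : ∀ x, H.Adj c x → x = c0 := fun x hx =>
            (hP3 c x hx (SimpleGraph.Reachable.refl c)).resolve_left hne
          have hu0 : u = c0 := hall u hu
          have : H.degree c = 1 := degree_eq_one_aux H hall (hu0 ▸ hu)
          omega
        have hr : H.Reachable u c := (H.adj_symm hu).reachable
        have := hP3 u w hw hr
        rcases this with h | h
        · exact absurd (h.trans hcc0.symm) hu.ne'
        · exact h.trans hcc0.symm
      · have hdu : H.degree u ≤ 1 := le_trans (H.degree_le_maxDegree u) (by omega)
        have hcm : c ∈ H.neighborFinset u :=
          (SimpleGraph.mem_neighborFinset _ _ _).2 (H.adj_symm hu)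
        have hwm : w ∈ H.neighborFinset u :=
          (SimpleGraph.mem_neighborFinset _ _ _).2 hw
        have hcard : (H.neighborFinset u).card ≤ 1 := by
          rwa [SimpleGraph.card_neighborFinset_eq_degree]
        exact Finset.card_le_one.1 hcard w hwm c hcm
    rcases Nat.eq_zero_or_pos k with rfl | hkpos
    · exfalso
      obtain ⟨e, heM, -⟩ := hcov c
      rw [hMeq] at heM
      simp only [Finset.univ_eq_empty, Finset.biUnion_empty, Finset.notMem_empty] at heM
    · haveI : Inhabited (Fin k) := ⟨⟨0, hkpos⟩⟩
      have hch : ∀ u ∈ H.neighborFinset c, ∃ i : Fin k, s(u, c) ∈ f i := by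
        intro u hu
        rw [SimpleGraph.mem_neighborFinset] at hu
        obtain ⟨e, heM, hue⟩ := hcov u
        rw [hMeq, Finset.mem_biUnion] at heM
        obtain ⟨i, -, hei⟩ := heM
        obtain ⟨w, rfl⟩ := Sym2.mem_iff_exists.1 hue
        have hadj : H.Adj u w := (hmatch i).1 _ hei
        have hwc : w = c := hnbr u hu w hadj
        subst hwc
        exact ⟨i, hei⟩
      choose g hg using hch
      set F : V → Fin k := fun u =>
        if h : u ∈ H.neighborFinset c then g u h else default with hF
      have hinj : Set.InjOn F (H.neighborFinset c) := by
        intro u1 h1 u2 h2 heq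
        by_contra hne
        have h1' : u1 ∈ H.neighborFinset c := Finset.mem_coe.1 h1
        have h2' : u2 ∈ H.neighborFinset c := Finset.mem_coe.1 h2
        rw [hF] at heq
        simp only [dif_pos h1', dif_pos h2'] at heq
        have hg1 := hg u1 h1'
        have hg2 := hg u2 h2'
        rw [heq] at hg1
        have hEne : s(u1, c) ≠ s(u2, c) := by
          intro h; exact hne (Sym2.congr_left.1 h)
        have := (hmatch (g u2 h2')).2 _ hg1 _ hg2 hEne c (Sym2.mem_mk_right u1 c)
        exact this (Sym2.mem_mk_right u2 c)
      calc H.maxDegree = H.degree c := hc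
        _ = (H.neighborFinset c).card :=
            (SimpleGraph.card_neighborFinset_eq_degree _ _).symm
        _ ≤ (Finset.univ : Finset (Fin k)).card :=
            Finset.card_le_card_of_injOn F (fun _ _ => Finset.mem_univ _) hinj
        _ = k := by simp
  exact le_antisymm (Nat.sInf_le hmemS) (le_csInf ⟨_, hmemS⟩ hlow)
end
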